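/- Assume α = β = 0. For every p ≥ 1: (1) (R^{2p}·ω)(e_1, e_3, …, e_1, e_3, e_1, e_2, e_1, e_2), with 2p−1 leading pairs (e_1, e_3) followed by e_1, e_2, e_1, e_2, equals (−1)^p (εη)^{p−1} 2^{2p−2} ω(e_2, e_4); (2) (R^{2p}·ω)(e_1, e_3, …, e_1, e_3, e_1, e_4, e_1, e_4), with 2p−1 leading pairs (e_1, e_3) followed by e_1, e_4, e_1, e_4, equals (−1)^{p+1} (εη)^p 2^{2p−2} ω(e_2, e_4). -/

import Mathlib

noncomputable section

/-- Gauss-equation curvature `R(X,Y)Z = h(Y,Z)·S(X) − h(X,Z)·S(Y)`. -/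
def RR {V : Type*} [AddCommGroup V] [Module ℝ V]
    (h : V →ₗ[ℝ] V →ₗ[ℝ] ℝ) (S : V →ₗ[ℝ] V) (X Y Z : V) : V :=
  h Y Z • S X - h X Z • S Y

/-- One application of the curvature action on an `m`-linear form (encoded as a
function on lists of vectors): `(R·T)(X,Y,Z₁,…,Zₘ) = −∑ᵢ T(Z₁,…,R(X,Y)Zᵢ,…,Zₘ)`;
the two newest (leftmost) arguments are consumed. -/
def RAct {V : Type*} [AddCommGroup V] [Module ℝ V]
    (h : V →ₗ[ℝ] V →ₗ[ℝ] ℝ) (S : V →ₗ[ℝ] V) (T : List V → ℝ) : List V → ℝ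
  | X :: Y :: Zs =>
      -∑ i ∈ Finset.range Zs.length, T (Zs.set i (RR h S X Y (Zs.getD i 0)))
  | _ => 0

/-- `R^p · ω`, as a function on lists of vectors (of length `2p+2`):
`R⁰·ω = ω` and `R^p·ω = R·(R^{p−1}·ω)`. -/
def Rpow {V : Type*} [AddCommGroup V] [Module ℝ V]
    (h : V →ₗ[ℝ] V →ₗ[ℝ] ℝ) (S : V →ₗ[ℝ] V) (ω : V →ₗ[ℝ] V →ₗ[ℝ] ℝ) (p : ℕ) :
    List V → ℝ :=
  (RAct h S)^[p] (fun l => ω (l.getD 0 0) (l.getD 1 0))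

/-- The list `X, Y, X, Y, …` with `p` pairs `(X, Y)`. -/
def pairList {V : Type*} (X Y : V) : ℕ → List V
  | 0 => []
  | p + 1 => X :: Y :: pairList X Y p

/-- The list `f 1, y, f 2, y, …, f p, y`. -/
def interleave {V : Type*} (f : ℕ → V) (y : V) : ℕ → List V
  | 0 => []
  | p + 1 => interleave f y p ++ [f (p + 1), y]

/-
Write `R = R(e₁, e₃)`. Since `α = β = 0`, `R` kills `e₁` and `e₃` and maps `e₂ ↦ -ε e₄`,
`e₄ ↦ η e₂`. In `R^{q+1}·ω` evaluated at `(e₁, e₃)^q, e₁, x, e₁, y`, the leading pair acts as a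
derivation that only sees the slots `x` and `y`, so these values `F_q(x, y)` obey
`F_{q+1}(x, y) = -(F_q(Rx, y) + F_q(x, Ry))`. Hence `F_{q+1}(e₂, e₂)` and `F_{q+1}(e₄, e₄)` are
multiples of `σ_q = F_q(e₂, e₄) + F_q(e₄, e₂)`, and `σ_{q+2} = -4εη σ_q`. Finally
`σ_0 = -ε ω(e₂, e₄)` only involves `R(e₁, e₂)` and `R(e₁, e₄)`.
-/

section PairList

variable {V : Type*} (X Y : V)

lemma length_pairList (q : ℕ) : (pairList X Y q).length = 2 * q := by
  induction q with
  | zero => rfl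
  | succ q ih => simp only [pairList, List.length_cons, ih]; ring

lemma eq_or_eq_of_mem_pairList {q : ℕ} {z : V} (hz : z ∈ pairList X Y q) : z = X ∨ z = Y := by
  induction q with
  | zero => simp [pairList] at hz
  | succ q ih =>
    simp only [pairList, List.mem_cons] at hz
    rcases hz with rfl | rfl | hz
    exacts [Or.inl rfl, Or.inr rfl, ih hz]

lemma getD_pairList_append [Zero V] (q : ℕ) (t : List V) (j : ℕ) :
    (pairList X Y q ++ t).getD (2 * q + j) 0 = t.getD j 0 := by
  rw [List.getD_append_right _ _ _ _ (by rw [length_pairList]; omega), length_pairList,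
    Nat.add_sub_cancel_left]

lemma set_pairList_append (q : ℕ) (t : List V) (j : ℕ) (v : V) :
    (pairList X Y q ++ t).set (2 * q + j) v = pairList X Y q ++ t.set j v := by
  rw [List.set_append_right _ _ (by rw [length_pairList]; omega), length_pairList,
    Nat.add_sub_cancel_left]

end PairList

section

variable {V : Type*} [AddCommGroup V] [Module ℝ V]

def IsHomogeneousInSlots (T : List V → ℝ) (m : ℕ) : Prop :=
  ∀ l : List V, l.length = m → ∀ i < m, ∀ (c : ℝ) (v : V),
    T (l.set i (c • v)) = c * T (l.set i v)

namespace IsHomogeneousInSlots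

variable {T : List V → ℝ} {m : ℕ} {l : List V}

lemma set_zero (hT : IsHomogeneousInSlots T m) (hl : l.length = m) {i : ℕ} (hi : i < m) :
    T (l.set i 0) = 0 := by
  simpa using hT l hl i hi 0 0

lemma sum_set_smul (hT : IsHomogeneousInSlots T m) (hl : l.length = m) (f : V → V) (c : ℝ) :
    ∑ k ∈ Finset.range l.length, T (l.set k (c • f (l.getD k 0))) =
      c * ∑ k ∈ Finset.range l.length, T (l.set k (f (l.getD k 0))) := by
  rw [Finset.mul_sum]
  exact Finset.sum_congr rfl fun k hk => hT l hl k (hl ▸ Finset.mem_range.mp hk) c _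

lemma set_set_smul (hT : IsHomogeneousInSlots T m) (hl : l.length = m) {j k : ℕ}
    (hj : j < m) (hk : k < m) (f : V → V) (hf : ∀ (c : ℝ) z, f (c • z) = c • f z)
    (c : ℝ) (v : V) :
    T ((l.set j (c • v)).set k (f ((l.set j (c • v)).getD k 0))) =
      c * T ((l.set j v).set k (f ((l.set j v).getD k 0))) := by
  by_cases hkj : k = j
  · subst hkj
    simp only [List.getD_eq_getElem?_getD, List.getElem?_set_self (hl ▸ hk), Option.getD_some,
      List.set_set, hf]
    exact hT l hl k hk c _
  · simp only [List.getD_eq_getElem?_getD, List.getElem?_set_ne (Ne.symm hkj),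
      List.set_comm _ _ (Ne.symm hkj)]
    exact hT _ (by rw [List.length_set, hl]) j hj c v

end IsHomogeneousInSlots

lemma isHomogeneousInSlots_bilinear (ω : V →ₗ[ℝ] V →ₗ[ℝ] ℝ) :
    IsHomogeneousInSlots (fun l => ω (l.getD 0 0) (l.getD 1 0)) 2 := by
  rintro (_ | ⟨a, _ | ⟨b, _ | _⟩⟩) hl i hi c v <;>
    simp only [List.length_cons, List.length_nil] at hl
  · omega
  · omega
  · interval_cases i <;> simp
  · omega

section Curvature

variable (h : V →ₗ[ℝ] V →ₗ[ℝ] ℝ) (S : V →ₗ[ℝ] V)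

lemma RR_smul_left (c : ℝ) (X Y Z : V) : RR h S (c • X) Y Z = c • RR h S X Y Z := by
  simp [RR, smul_sub, smul_smul, mul_comm]

lemma RR_smul_mid (c : ℝ) (X Y Z : V) : RR h S X (c • Y) Z = c • RR h S X Y Z := by
  simp [RR, smul_sub, smul_smul, mul_comm]

lemma RR_smul_right (c : ℝ) (X Y Z : V) : RR h S X Y (c • Z) = c • RR h S X Y Z := by
  simp [RR, smul_sub, smul_smul]

lemma RAct_cons (T : List V → ℝ) (X Y : V) (Zs : List V) :
    RAct h S T (X :: Y :: Zs) =
      -∑ i ∈ Finset.range Zs.length, T (Zs.set i (RR h S X Y (Zs.getD i 0))) := rfl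

lemma IsHomogeneousInSlots.rAct {T : List V → ℝ} {m : ℕ} (hT : IsHomogeneousInSlots T m) :
    IsHomogeneousInSlots (RAct h S T) (m + 2) := by
  rintro (_ | ⟨X, _ | ⟨Y, Zs⟩⟩) hl i hi c v
  · simp at hl
  · simp at hl
  have hZs : Zs.length = m := by simpa using hl
  rcases i with _ | _ | j
  · simp only [List.set_cons_zero, RAct_cons, RR_smul_left, hT.sum_set_smul hZs]
    ring
  · simp only [List.set_cons_succ, List.set_cons_zero, RAct_cons, RR_smul_mid,
      hT.sum_set_smul hZs]
    ring
  · simp only [List.set_cons_succ, RAct_cons, List.length_set, Finset.mul_sum, mul_neg]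
    exact congrArg _ <| Finset.sum_congr rfl fun k hk =>
      hT.set_set_smul hZs (by omega) (hZs ▸ Finset.mem_range.mp hk) _ (RR_smul_right h S · X Y) c v

lemma RAct_cons_eq_neg_sum_of_subset {T : List V → ℝ} {u w : V} {Zs : List V}
    (hT : IsHomogeneousInSlots T Zs.length) {s : Finset ℕ} (hs : s ⊆ Finset.range Zs.length)
    (hzero : ∀ i < Zs.length, i ∉ s → RR h S u w (Zs.getD i 0) = 0) :
    RAct h S T (u :: w :: Zs) = -∑ i ∈ s, T (Zs.set i (RR h S u w (Zs.getD i 0))) := by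
  rw [RAct_cons, Finset.sum_subset hs]
  intro i hi his
  have hi := Finset.mem_range.mp hi
  rw [hzero i hi his]
  exact hT.set_zero rfl hi

variable (ω : V →ₗ[ℝ] V →ₗ[ℝ] ℝ)

lemma Rpow_succ (q : ℕ) : Rpow h S ω (q + 1) = RAct h S (Rpow h S ω q) :=
  Function.iterate_succ_apply' _ _ _

lemma isHomogeneousInSlots_Rpow (q : ℕ) : IsHomogeneousInSlots (Rpow h S ω q) (2 * q + 2) := by
  induction q with
  | zero => exact isHomogeneousInSlots_bilinear ω
  | succ q ih => rw [Rpow_succ]; exact ih.rAct h S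

end Curvature

section PairRpow

variable (h : V →ₗ[ℝ] V →ₗ[ℝ] ℝ) (S : V →ₗ[ℝ] V) (ω : V →ₗ[ℝ] V →ₗ[ℝ] ℝ)

def pairRpow (u w : V) (q : ℕ) (x y : V) : ℝ :=
  Rpow h S ω (q + 1) (pairList u w q ++ [u, x, u, y])

variable {u w : V}

lemma pairRpow_zero (x y : V) :
    pairRpow h S ω u w 0 x y = -(ω (RR h S u x u) y + ω u (RR h S u x y)) := by
  simp [pairRpow, pairList, RAct_cons, Finset.sum_range_succ, Rpow]

lemma pairRpow_smul_left (q : ℕ) (c : ℝ) (x y : V) :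
    pairRpow h S ω u w q (c • x) y = c * pairRpow h S ω u w q x y := by
  have := isHomogeneousInSlots_Rpow h S ω (q + 1) (pairList u w q ++ [u, x, u, y])
    (by simp [length_pairList]; ring) (2 * q + 1) (by omega) c x
  simpa [pairRpow, set_pairList_append] using this

lemma pairRpow_smul_right (q : ℕ) (c : ℝ) (x y : V) :
    pairRpow h S ω u w q x (c • y) = c * pairRpow h S ω u w q x y := by
  have := isHomogeneousInSlots_Rpow h S ω (q + 1) (pairList u w q ++ [u, x, u, y])
    (by simp [length_pairList]; ring) (2 * q + 3) (by omega) c y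
  simpa [pairRpow, set_pairList_append] using this

lemma pairRpow_succ (huu : RR h S u w u = 0) (hww : RR h S u w w = 0) (q : ℕ) (x y : V) :
    pairRpow h S ω u w (q + 1) x y =
      -(pairRpow h S ω u w q (RR h S u w x) y + pairRpow h S ω u w q x (RR h S u w y)) := by
  have hlen : (pairList u w q ++ [u, x, u, y]).length = 2 * q + 4 := by
    simp [length_pairList]
  have hzero : ∀ i < 2 * q + 4, i ∉ ({2 * q + 1, 2 * q + 3} : Finset ℕ) →
      RR h S u w ((pairList u w q ++ [u, x, u, y]).getD i 0) = 0 := by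
    intro i hi his
    simp only [Finset.mem_insert, Finset.mem_singleton, not_or] at his
    rcases lt_or_ge i (2 * q) with hiq | hiq
    · have hiL : i < (pairList u w q).length := by rwa [length_pairList]
      rw [List.getD_append _ _ _ _ hiL, List.getD_eq_getElem _ _ hiL]
      rcases eq_or_eq_of_mem_pairList u w (List.getElem_mem hiL) with hz | hz
      · rw [hz, huu]
      · rw [hz, hww]
    · obtain ⟨j, rfl⟩ := Nat.exists_eq_add_of_le hiq
      rw [getD_pairList_append]
      obtain rfl | rfl : j = 0 ∨ j = 2 := by omega
      exacts [huu, huu]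
  unfold pairRpow
  rw [Rpow_succ, show pairList u w (q + 1) = u :: w :: pairList u w q from rfl, List.cons_append,
    List.cons_append, RAct_cons_eq_neg_sum_of_subset h S
      (hlen ▸ isHomogeneousInSlots_Rpow h S ω (q + 1))
      (by intro i; simp [length_pairList]; omega) (hlen ▸ hzero),
    Finset.sum_pair (by omega), getD_pairList_append, getD_pairList_append,
    set_pairList_append, set_pairList_append]
  rfl

end PairRpow

section JordanPair

variable (h : V →ₗ[ℝ] V →ₗ[ℝ] ℝ) (S : V →ₗ[ℝ] V) (ω : V →ₗ[ℝ] V →ₗ[ℝ] ℝ) {u w : V}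
  (huu : RR h S u w u = 0) (hww : RR h S u w w = 0)
include huu hww

lemma pairRpow_succ_of_eq_smul {x y x' y' : V} {cx cy : ℝ} (hx : RR h S u w x = cx • x')
    (hy : RR h S u w y = cy • y') (q : ℕ) :
    pairRpow h S ω u w (q + 1) x y =
      -(cx * pairRpow h S ω u w q x' y + cy * pairRpow h S ω u w q x y') := by
  rw [pairRpow_succ h S ω huu hww, hx, hy, pairRpow_smul_left, pairRpow_smul_right]

variable {a b : V} {c d : ℝ} (ha : RR h S u w a = c • b) (hb : RR h S u w b = d • a)
include ha hb

lemma pairRpow_add_two_sym (q : ℕ) :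
    pairRpow h S ω u w (q + 2) a b + pairRpow h S ω u w (q + 2) b a =
      4 * c * d * (pairRpow h S ω u w q a b + pairRpow h S ω u w q b a) := by
  rw [pairRpow_succ_of_eq_smul h S ω huu hww ha hb, pairRpow_succ_of_eq_smul h S ω huu hww hb ha,
    pairRpow_succ_of_eq_smul h S ω huu hww ha ha, pairRpow_succ_of_eq_smul h S ω huu hww hb hb]
  ring

lemma pairRpow_two_mul_sym (k : ℕ) :
    pairRpow h S ω u w (2 * k) a b + pairRpow h S ω u w (2 * k) b a =
      (4 * c * d) ^ k * (pairRpow h S ω u w 0 a b + pairRpow h S ω u w 0 b a) := by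
  induction k with
  | zero => simp
  | succ k ih =>
    rw [show 2 * (k + 1) = 2 * k + 2 by ring, pairRpow_add_two_sym h S ω huu hww ha hb, ih]
    ring

lemma pairRpow_two_mul_add_one_self (k : ℕ) :
    pairRpow h S ω u w (2 * k + 1) a a =
      -c * (4 * c * d) ^ k * (pairRpow h S ω u w 0 a b + pairRpow h S ω u w 0 b a) := by
  rw [pairRpow_succ_of_eq_smul h S ω huu hww ha ha]
  linear_combination (-c) * pairRpow_two_mul_sym h S ω huu hww ha hb k

end JordanPair

end

theorem stmt16_general
    {V : Type*} [AddCommGroup V] [Module ℝ V]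
    (n : ℕ) (hn : 2 ≤ n) (e : ℕ → V)
    (h ω : V →ₗ[ℝ] V →ₗ[ℝ] ℝ)
    (S : V →ₗ[ℝ] V)
    (α β ε η : ℝ) (hε : ε = 1 ∨ ε = -1)
    (hS1 : S (e 1) = α • e 1 + e 2)
    (hS2 : S (e 2) = α • e 2)
    (hS3 : S (e 3) = β • e 3 + e 4)
    (hS4 : S (e 4) = β • e 4)
    (hh12 : h (e 1) (e 2) = ε) (hh21 : h (e 2) (e 1) = ε)
    (hh34 : h (e 3) (e 4) = η)
    (hh0 : ∀ i j, 1 ≤ i → i ≤ 2 * n → 1 ≤ j → j ≤ 2 * n → min i j ≤ 4 →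
      ¬((i = 1 ∧ j = 2) ∨ (i = 2 ∧ j = 1) ∨ (i = 3 ∧ j = 4) ∨ (i = 4 ∧ j = 3)) →
      h (e i) (e j) = 0)
    (hα : α = 0) (hβ0 : β = 0)
    (p : ℕ) (hp : 1 ≤ p) :
    Rpow h S ω (2 * p) (pairList (e 1) (e 3) (2 * p - 1) ++ [e 1, e 2, e 1, e 2]) =
      (-1) ^ p * (ε * η) ^ (p - 1) * 2 ^ (2 * p - 2) * ω (e 2) (e 4) ∧
    Rpow h S ω (2 * p) (pairList (e 1) (e 3) (2 * p - 1) ++ [e 1, e 4, e 1, e 4]) =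
      (-1) ^ (p + 1) * (ε * η) ^ p * 2 ^ (2 * p - 2) * ω (e 2) (e 4) := by
  subst hα hβ0
  have hvan : ∀ i j : ℕ, 1 ≤ i ∧ i ≤ 4 ∧ 1 ≤ j ∧ j ≤ 4 ∧ i + j ≠ 3 ∧ i + j ≠ 7 →
      h (e i) (e j) = 0 := fun i j hij =>
    hh0 i j (by omega) (by omega) (by omega) (by omega) (by omega) (by omega)
  have hR1 : RR h S (e 1) (e 3) (e 1) = 0 := by
    simp [RR, hvan 3 1 (by decide), hvan 1 1 (by decide)]
  have hR3 : RR h S (e 1) (e 3) (e 3) = 0 := by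
    simp [RR, hvan 3 3 (by decide), hvan 1 3 (by decide)]
  have hR2 : RR h S (e 1) (e 3) (e 2) = (-ε) • e 4 := by
    simp [RR, hvan 3 2 (by decide), hh12, hS3]
  have hR4 : RR h S (e 1) (e 3) (e 4) = η • e 2 := by
    simp [RR, hvan 1 4 (by decide), hh34, hS1]
  have hσ : pairRpow h S ω (e 1) (e 3) 0 (e 2) (e 4) + pairRpow h S ω (e 1) (e 3) 0 (e 4) (e 2) =
      -ε * ω (e 2) (e 4) := by
    simp [pairRpow_zero, RR, hh21, hvan 2 4 (by decide), hvan 4 1 (by decide),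
      hvan 4 2 (by decide), hS1, hS2, hS4]
  obtain ⟨k, rfl⟩ : ∃ k, p = k + 1 := ⟨p - 1, by omega⟩
  have hε2 : ε ^ 2 = 1 := by rcases hε with rfl | rfl <;> norm_num
  have hpow : (4 * -ε * η) ^ k = (-1) ^ k * (ε * η) ^ k * 2 ^ (2 * k) := by
    rw [pow_mul, show 4 * -ε * η = -1 * (ε * η) * 2 ^ 2 by ring, mul_pow, mul_pow]
  rw [show 2 * (k + 1) - 1 = 2 * k + 1 by omega, show 2 * (k + 1) - 2 = 2 * k by omega,
    Nat.add_sub_cancel]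
  refine ⟨(pairRpow_two_mul_add_one_self h S ω hR1 hR3 hR2 hR4 k).trans ?_,
    (pairRpow_two_mul_add_one_self h S ω hR1 hR3 hR4 hR2 k).trans ?_⟩
  · rw [hσ, hpow]
    linear_combination (-(-1) ^ k * (ε * η) ^ k * 2 ^ (2 * k) * ω (e 2) (e 4)) * hε2
  · rw [add_comm, hσ, mul_right_comm 4 η, hpow]
    ring

theorem stmt16
    {V : Type*} [AddCommGroup V] [Module ℝ V]
    (n : ℕ) (hn : 2 ≤ n) (e : ℕ → V)
    (hbasis : ∃ b : Module.Basis (Fin (2 * n)) ℝ V, ∀ i : Fin (2 * n), b i = e (i.1 + 1))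
    (h ω : V →ₗ[ℝ] V →ₗ[ℝ] ℝ)
    (hsymm : ∀ X Y, h X Y = h Y X)
    (halt : ∀ X, ω X X = 0)
    (S : V →ₗ[ℝ] V)
    (α β ε η : ℝ) (hε : ε = 1 ∨ ε = -1) (hη : η = 1 ∨ η = -1)
    (hS1 : S (e 1) = α • e 1 + e 2)
    (hS2 : S (e 2) = α • e 2)
    (hS3 : S (e 3) = β • e 3 + e 4)
    (hS4 : S (e 4) = β • e 4)
    (hh12 : h (e 1) (e 2) = ε) (hh21 : h (e 2) (e 1) = ε)
    (hh34 : h (e 3) (e 4) = η) (hh43 : h (e 4) (e 3) = η)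
    (hh0 : ∀ i j, 1 ≤ i → i ≤ 2 * n → 1 ≤ j → j ≤ 2 * n → min i j ≤ 4 →
      ¬((i = 1 ∧ j = 2) ∨ (i = 2 ∧ j = 1) ∨ (i = 3 ∧ j = 4) ∨ (i = 4 ∧ j = 3)) →
      h (e i) (e j) = 0)
    (hα : α = 0) (hβ0 : β = 0)
    (p : ℕ) (hp : 1 ≤ p) :
    Rpow h S ω (2 * p) (pairList (e 1) (e 3) (2 * p - 1) ++ [e 1, e 2, e 1, e 2]) =
      (-1) ^ p * (ε * η) ^ (p - 1) * 2 ^ (2 * p - 2) * ω (e 2) (e 4) ∧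
    Rpow h S ω (2 * p) (pairList (e 1) (e 3) (2 * p - 1) ++ [e 1, e 4, e 1, e 4]) =
      (-1) ^ (p + 1) * (ε * η) ^ p * 2 ^ (2 * p - 2) * ω (e 2) (e 4) :=
  stmt16_general n hn e h ω S α β ε η hε hS1 hS2 hS3 hS4 hh12 hh21 hh34 hh0 hα hβ0 p hp

end
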